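/- Let $G$ be a finitely generated amenable group with word metric and F\o lner sequence $(S_j)_{j\in\mathbb{N}}$. Let $r \in \mathbb{N}_{>0}$, let $T$ be an $r$-tiling of $G$, and set $T_j := \{g \in T : B_r(g) \subseteq S_j\}$. Then there exists $l \in \mathbb{N}$ such that for all $j \ge l$: $\frac{1}{2\,|B_{2r}(e)|} \le \frac{|T_j|}{|S_j|} \le \frac{1}{|B_r(e)|}$. -/

import Mathlib

/-- The word distance on a group `G` with respect to a generating set `Sg`:
`d(g,h)` is the minimal length of a word in `Sg ∪ Sg⁻¹` representing `g⁻¹h`. -/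
noncomputable def wordDist {G : Type*} [Group G] (Sg : Set G) (g h : G) : ℕ :=
  sInf {n | ∃ w : List G, w.length = n ∧ (∀ x ∈ w, x ∈ Sg ∨ x⁻¹ ∈ Sg) ∧ w.prod = g⁻¹ * h}

/-- The closed ball of radius `r` around `g` in the word metric. -/
noncomputable def wball {G : Type*} [Group G] (Sg : Set G) (g : G) (r : ℕ) : Set G :=
  {x | wordDist Sg g x ≤ r}

/-- The `r`-boundary `∂_r A = {g : 0 < d(g, A) ≤ r}` of a set `A`. -/
noncomputable def rBoundary {G : Type*} [Group G] (Sg : Set G) (r : ℕ) (A : Set G) : Set G :=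
  {g | g ∉ A ∧ ∃ a ∈ A, wordDist Sg a g ≤ r}

/-- A Følner sequence: a sequence of nonempty finite subsets whose `r`-boundaries are
asymptotically negligible for every `r > 0`. -/
def IsFolner {G : Type*} [Group G] (Sg : Set G) (S : ℕ → Finset G) : Prop :=
  (∀ j, (S j).Nonempty) ∧ ∀ r : ℕ, 0 < r →
    Filter.Tendsto (fun j => ((rBoundary Sg r (S j : Set G)).ncard : ℝ) / (S j).card)
      Filter.atTop (nhds 0)

/-- `c : G → ℝ` is a boundary in the degree-zero uniformly finite chain complex: there is
a bounded `1`-chain `b : G² → ℝ`, supported on pairs of uniformly bounded distance, with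
`∂₁ b = c`, where `∂₁ b (x) = ∑_y b(y,x) - ∑_y b(x,y)`. -/
noncomputable def IsUFBoundary {G : Type*} [Group G] (Sg : Set G) (c : G → ℝ) : Prop :=
  ∃ b : G × G → ℝ,
    (∃ C : ℝ, ∀ p, |b p| ≤ C) ∧
    (∃ R : ℕ, ∀ p : G × G, R < wordDist Sg p.1 p.2 → b p = 0) ∧
    ∀ x : G, c x = (∑ᶠ y, b (y, x)) - (∑ᶠ y, b (x, y))

/-!
The balls `B_r(t)`, `t ∈ T_j`, are disjoint and lie in `S_j`, so `|T_j| |B_r| ≤ |S_j|`.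
Conversely, a point `g ∈ S_j` with `B_{3r}(g) ⊆ S_j` lies in `B_{2r}(t)` for some `t ∈ T`, and
then `B_r(t) ⊆ B_{3r}(g) ⊆ S_j`, so `t ∈ T_j`: such points number at most `|T_j| |B_{2r}|`. Every
other point of `S_j` is within `3r` of `∂_{3r} S_j`, so there are at most `|∂_{3r} S_j| |B_{3r}|`
of them, which the Følner property eventually makes less than `|S_j| / 2`.
-/

open Set

namespace Set

variable {ι α : Type*}

theorem Finite.ncard_biUnion_le_mul {t : Set ι} (ht : t.Finite) {s : ι → Set α} {n : ℕ}
    (hs : ∀ i ∈ t, (s i).ncard ≤ n) : (⋃ i ∈ t, s i).ncard ≤ t.ncard * n := by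
  calc (⋃ i ∈ t, s i).ncard ≤ ∑ i ∈ ht.toFinset, (s i).ncard := by
        simpa using ht.toFinset.set_ncard_biUnion_le s
    _ ≤ ht.toFinset.card * n := Finset.sum_le_card_nsmul _ _ _ (by simpa using hs)
    _ = t.ncard * n := by rw [ncard_eq_toFinset_card t ht]

theorem Finite.ncard_mul_eq_ncard_biUnion {t : Set ι} (ht : t.Finite) {s : ι → Set α} {n : ℕ}
    (hfin : ∀ i ∈ t, (s i).Finite) (hs : ∀ i ∈ t, (s i).ncard = n) (hdisj : t.PairwiseDisjoint s) :
    t.ncard * n = (⋃ i ∈ t, s i).ncard := by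
  rw [ht.ncard_biUnion hfin hdisj, finsum_mem_eq_finite_toFinset_sum _ ht,
    Finset.sum_const_nat (by simpa using hs), ncard_eq_toFinset_card t ht]

end Set

section WordMetric

open scoped Pointwise

variable {G : Type*} [Group G] {Sg : Set G}

theorem wordDist_le_length {g h : G} (w : List G) (hw : ∀ x ∈ w, x ∈ Sg ∨ x⁻¹ ∈ Sg)
    (hprod : w.prod = g⁻¹ * h) : wordDist Sg g h ≤ w.length :=
  Nat.sInf_le ⟨w, rfl, hw, hprod⟩

theorem exists_word_length_eq_wordDist (hgen : Subgroup.closure Sg = ⊤) (g h : G) :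
    ∃ w : List G, w.length = wordDist Sg g h ∧ (∀ x ∈ w, x ∈ Sg ∨ x⁻¹ ∈ Sg) ∧
      w.prod = g⁻¹ * h := by
  have hmem : g⁻¹ * h ∈ Submonoid.closure (Sg ∪ Sg⁻¹) := by
    rw [← Subgroup.closure_toSubmonoid, hgen]
    exact Subgroup.mem_top _
  obtain ⟨w, hw, hprod⟩ := Submonoid.exists_list_of_mem_closure hmem
  have hne : {n | ∃ w : List G, w.length = n ∧ (∀ x ∈ w, x ∈ Sg ∨ x⁻¹ ∈ Sg) ∧
      w.prod = g⁻¹ * h}.Nonempty :=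
    ⟨w.length, w, rfl, fun x hx => (hw x hx).imp id Set.mem_inv.mp, hprod⟩
  exact Nat.sInf_mem hne

theorem wordDist_self (Sg : Set G) (g : G) : wordDist Sg g g = 0 :=
  Nat.eq_zero_of_le_zero (wordDist_le_length [] (by simp) (by simp))

theorem wordDist_mul_left (Sg : Set G) (k g h : G) :
    wordDist Sg (k * g) (k * h) = wordDist Sg g h := by
  simp only [wordDist, mul_inv_rev, mul_assoc, inv_mul_cancel_left]

theorem exists_word_swap {g h : G} {n : ℕ}
    (hw : ∃ w : List G, w.length = n ∧ (∀ x ∈ w, x ∈ Sg ∨ x⁻¹ ∈ Sg) ∧ w.prod = g⁻¹ * h) :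
    ∃ w : List G, w.length = n ∧ (∀ x ∈ w, x ∈ Sg ∨ x⁻¹ ∈ Sg) ∧ w.prod = h⁻¹ * g := by
  obtain ⟨w, hlen, hmem, hprod⟩ := hw
  refine ⟨(w.map (·⁻¹)).reverse, by simp [hlen], ?_, ?_⟩
  · simp only [List.mem_reverse, List.mem_map]
    rintro _ ⟨y, hy, rfl⟩
    simpa [or_comm] using hmem y hy
  · rw [← List.prod_inv_reverse, hprod, mul_inv_rev, inv_inv]

theorem wordDist_comm (Sg : Set G) (g h : G) : wordDist Sg g h = wordDist Sg h g := by
  unfold wordDist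
  congr 1
  ext n
  exact ⟨exists_word_swap, exists_word_swap⟩

theorem mem_wball_comm {g x : G} {n : ℕ} : x ∈ wball Sg g n ↔ g ∈ wball Sg x n := by
  simp only [wball, mem_ofPred_eq, wordDist_comm Sg g x]

theorem wordDist_triangle (hgen : Subgroup.closure Sg = ⊤) (g h k : G) :
    wordDist Sg g k ≤ wordDist Sg g h + wordDist Sg h k := by
  obtain ⟨w₁, hl₁, hm₁, hp₁⟩ := exists_word_length_eq_wordDist hgen g h
  obtain ⟨w₂, hl₂, hm₂, hp₂⟩ := exists_word_length_eq_wordDist hgen h k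
  calc wordDist Sg g k ≤ (w₁ ++ w₂).length :=
        wordDist_le_length _ (by simpa only [List.mem_append, or_imp, forall_and] using ⟨hm₁, hm₂⟩)
          (by rw [List.prod_append, hp₁, hp₂]; group)
    _ = wordDist Sg g h + wordDist Sg h k := by rw [List.length_append, hl₁, hl₂]

theorem mem_wball_self (Sg : Set G) (g : G) (n : ℕ) : g ∈ wball Sg g n := by
  simp [wball, wordDist_self]

theorem wball_eq_smul (Sg : Set G) (g : G) (n : ℕ) : wball Sg g n = g • wball Sg 1 n := by
  ext x
  rw [Set.mem_smul_set_iff_inv_smul_mem]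
  simp only [wball, mem_ofPred_eq, smul_eq_mul, ← wordDist_mul_left Sg g⁻¹ g x, inv_mul_cancel]

theorem ncard_wball (Sg : Set G) (g : G) (n : ℕ) :
    (wball Sg g n).ncard = (wball Sg 1 n).ncard := by
  rw [wball_eq_smul, Set.ncard_smul_set]

theorem wball_one_finite (hSg : Sg.Finite) (hgen : Subgroup.closure Sg = ⊤) (n : ℕ) :
    (wball Sg 1 n).Finite := by
  set A := Sg ∪ Sg⁻¹
  have : Finite A := (hSg.union hSg.inv).to_subtype
  refine (((List.finite_length_le A n).image (List.map Subtype.val)).image List.prod).subset ?_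
  intro x hx
  obtain ⟨w, hlen, hmem, hprod⟩ := exists_word_length_eq_wordDist hgen 1 x
  have hwA : ∀ y ∈ w, y ∈ A := fun y hy => (hmem y hy).imp id Set.mem_inv.mpr
  refine ⟨w, ⟨w.pmap Subtype.mk hwA, ?_, by simp [List.map_pmap]⟩, by simpa using hprod⟩
  show (w.pmap Subtype.mk hwA).length ≤ n
  rw [List.length_pmap, hlen]
  exact hx

theorem wball_finite (hSg : Sg.Finite) (hgen : Subgroup.closure Sg = ⊤) (g : G) (n : ℕ) :
    (wball Sg g n).Finite := by
  rw [wball_eq_smul]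
  exact (wball_one_finite hSg hgen n).smul_set

theorem ncard_wball_pos (hSg : Sg.Finite) (hgen : Subgroup.closure Sg = ⊤) (n : ℕ) :
    0 < (wball Sg 1 n).ncard :=
  (Set.ncard_pos (wball_one_finite hSg hgen n)).mpr ⟨1, mem_wball_self Sg 1 n⟩

end WordMetric

section Tiling

variable {G : Type*} [Group G]

theorem Set.Finite.setOf_wball_subset {S : Set G} (hS : S.Finite) (Sg T : Set G) (r : ℕ) :
    {g | g ∈ T ∧ wball Sg g r ⊆ S}.Finite :=
  hS.subset fun g hg => hg.2 (mem_wball_self Sg g r)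

variable {Sg T S : Set G}

theorem rBoundary_finite (hSg : Sg.Finite) (hgen : Subgroup.closure Sg = ⊤) (ρ : ℕ)
    (hS : S.Finite) : (rBoundary Sg ρ S).Finite :=
  (hS.biUnion fun a _ => wball_finite hSg hgen a ρ).subset
    fun _ ⟨_, _, ha, hd⟩ => mem_biUnion ha hd

theorem ncard_tiles_mul_le (hSg : Sg.Finite) (hgen : Subgroup.closure Sg = ⊤) {r : ℕ}
    (hdisj : ∀ g₁ ∈ T, ∀ g₂ ∈ T, g₁ ≠ g₂ → Disjoint (wball Sg g₁ r) (wball Sg g₂ r))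
    (hS : S.Finite) :
    {g | g ∈ T ∧ wball Sg g r ⊆ S}.ncard * (wball Sg 1 r).ncard ≤ S.ncard :=
  calc _ = (⋃ g ∈ {g | g ∈ T ∧ wball Sg g r ⊆ S}, wball Sg g r).ncard :=
        (hS.setOf_wball_subset Sg T r).ncard_mul_eq_ncard_biUnion
          (fun g _ => wball_finite hSg hgen g r)
          (fun g _ => ncard_wball Sg g r) fun g₁ h₁ g₂ h₂ hne => hdisj g₁ h₁.1 g₂ h₂.1 hne
    _ ≤ S.ncard := ncard_le_ncard (iUnion₂_subset fun _ hg => hg.2) hS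

theorem ncard_wball_subset_le (hSg : Sg.Finite) (hgen : Subgroup.closure Sg = ⊤) {R r : ℕ}
    (hcover : ∀ g : G, ∃ t ∈ T, g ∈ wball Sg t R) (hS : S.Finite) :
    {g ∈ S | wball Sg g (R + r) ⊆ S}.ncard ≤
      {g | g ∈ T ∧ wball Sg g r ⊆ S}.ncard * (wball Sg 1 R).ncard := by
  have htiles := hS.setOf_wball_subset Sg T r
  have hsub : {g ∈ S | wball Sg g (R + r) ⊆ S} ⊆
      ⋃ t ∈ {g | g ∈ T ∧ wball Sg g r ⊆ S}, wball Sg t R := by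
    rintro g ⟨-, hgS⟩
    obtain ⟨t, htT, hgt⟩ := hcover g
    refine mem_biUnion ⟨htT, fun y (hy : wordDist Sg t y ≤ r) => hgS ?_⟩ hgt
    exact (wordDist_triangle hgen g t y).trans (add_le_add (mem_wball_comm.mp hgt) hy)
  calc _ ≤ (⋃ t ∈ {g | g ∈ T ∧ wball Sg g r ⊆ S}, wball Sg t R).ncard :=
        ncard_le_ncard hsub (htiles.biUnion fun t _ => wball_finite hSg hgen t R)
    _ ≤ _ := htiles.ncard_biUnion_le_mul fun t _ => (ncard_wball Sg t R).le

theorem ncard_not_wball_subset_le (hSg : Sg.Finite) (hgen : Subgroup.closure Sg = ⊤) (ρ : ℕ)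
    (hS : S.Finite) :
    {g ∈ S | ¬ wball Sg g ρ ⊆ S}.ncard ≤ (rBoundary Sg ρ S).ncard * (wball Sg 1 ρ).ncard := by
  have hbdry := rBoundary_finite hSg hgen ρ hS
  have hsub : {g ∈ S | ¬ wball Sg g ρ ⊆ S} ⊆ ⋃ h ∈ rBoundary Sg ρ S, wball Sg h ρ := by
    rintro g ⟨hgS, hg⟩
    obtain ⟨h, hgh, hhS⟩ := not_subset.mp hg
    exact mem_biUnion ⟨hhS, g, hgS, hgh⟩ (mem_wball_comm.mp hgh)
  calc _ ≤ (⋃ h ∈ rBoundary Sg ρ S, wball Sg h ρ).ncard :=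
        ncard_le_ncard hsub (hbdry.biUnion fun h _ => wball_finite hSg hgen h ρ)
    _ ≤ _ := hbdry.ncard_biUnion_le_mul fun h _ => (ncard_wball Sg h ρ).le

theorem ncard_le_tiles_add_rBoundary (hSg : Sg.Finite) (hgen : Subgroup.closure Sg = ⊤)
    {R r : ℕ} (hcover : ∀ g : G, ∃ t ∈ T, g ∈ wball Sg t R) (hS : S.Finite) :
    S.ncard ≤ {g | g ∈ T ∧ wball Sg g r ⊆ S}.ncard * (wball Sg 1 R).ncard +
      (rBoundary Sg (R + r) S).ncard * (wball Sg 1 (R + r)).ncard := by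
  have hsplit : S ⊆ {g ∈ S | wball Sg g (R + r) ⊆ S} ∪ {g ∈ S | ¬ wball Sg g (R + r) ⊆ S} :=
    fun g hg => (em _).imp (⟨hg, ·⟩) (⟨hg, ·⟩)
  calc S.ncard ≤ _ :=
        ncard_le_ncard hsplit (hS.subset (union_subset (sep_subset _ _) (sep_subset _ _)))
    _ ≤ _ := ncard_union_le _ _
    _ ≤ _ := add_le_add (ncard_wball_subset_le hSg hgen hcover hS)
        (ncard_not_wball_subset_le hSg hgen _ hS)

end Tiling

/-- Let `G` be finitely generated amenable with Følner sequence
`(S_j)`, `r > 0`, `T` an `r`-tiling of `G`, and `T_j = {g ∈ T : B_r(g) ⊆ S_j}`. Then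
eventually `1/(2|B_{2r}(e)|) ≤ |T_j|/|S_j| ≤ 1/|B_r(e)|`. -/
theorem tiling_density {G : Type*} [Group G]
    (Sg : Finset G) (hgen : Subgroup.closure (Sg : Set G) = ⊤)
    (S : ℕ → Finset G) (hS : IsFolner (Sg : Set G) S)
    (r : ℕ) (hr : 0 < r) (T : Set G)
    (hdisj : ∀ g₁ ∈ T, ∀ g₂ ∈ T, g₁ ≠ g₂ →
      Disjoint (wball (Sg : Set G) g₁ r) (wball (Sg : Set G) g₂ r))
    (hcover : ∀ g : G, ∃ t ∈ T, g ∈ wball (Sg : Set G) t (2 * r)) :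
    ∃ l : ℕ, ∀ j, l ≤ j →
      (1 : ℝ) / (2 * (Set.ncard (wball (Sg : Set G) 1 (2 * r)))) ≤
          (Set.ncard {g | g ∈ T ∧ wball (Sg : Set G) g r ⊆ (S j : Set G)} : ℝ) /
            (S j).card
      ∧ (Set.ncard {g | g ∈ T ∧ wball (Sg : Set G) g r ⊆ (S j : Set G)} : ℝ) /
            (S j).card ≤ (1 : ℝ) / (Set.ncard (wball (Sg : Set G) 1 r)) := by
  have hSg := Sg.finite_toSet
  have hball (n : ℕ) : (0 : ℝ) < (wball (Sg : Set G) 1 n).ncard := by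
    exact_mod_cast ncard_wball_pos hSg hgen n
  obtain ⟨l, hl⟩ := Filter.eventually_atTop.mp <| (hS.2 (2 * r + r) (by omega)).eventually_lt_const
    (one_div_pos.mpr (mul_pos two_pos (hball (2 * r + r))))
  refine ⟨l, fun j hj => ?_⟩
  have hSj : (0 : ℝ) < (S j).card := by exact_mod_cast (hS.1 j).card_pos
  have hpack := ncard_tiles_mul_le hSg hgen hdisj (S j).finite_toSet
  have hcount := ncard_le_tiles_add_rBoundary hSg hgen (r := r) hcover (S j).finite_toSet
  have hsmall := hl j hj
  rw [ncard_coe_finset] at hpack hcount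
  rw [div_lt_div_iff₀ hSj (mul_pos two_pos (hball _)), one_mul] at hsmall
  constructor
  · rw [div_le_div_iff₀ (mul_pos two_pos (hball _)) hSj, one_mul]
    have hcountR := (Nat.cast_le (α := ℝ)).mpr hcount
    push_cast at hcountR
    linarith
  · rw [div_le_div_iff₀ hSj (hball _), one_mul]
    exact_mod_cast hpack
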